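/- arXiv:2008.08013 — 4 statements merged into one kernel-verified Lean document; each statement's English description precedes it below -/
import Mathlib

section
/- Fix q > 0 and a > 0, set r_min = q/a². Define R(θ) = r_min · H(a²|θ|/q) for θ ∈ ℝ and V(θ) = sign(θ)·√(a² − q/R(θ)) for θ ≠ 0, where H = G⁻¹ with G(s)=√(s(s-1))+ln(√s+√(s-1)). Then for θ ≠ 0, R'(θ) = V(θ)/a and V'(θ) = q/(2 a R(θ)²); consequently t ↦ (R(θ₀+ta), V(θ₀+ta)) solves the Kepler ODE ṙ=v, v̇=q/(2r²) away from θ₀+ta=0. -/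
noncomputable def G (s : ℝ) : ℝ :=
  Real.sqrt (s * (s - 1)) + Real.log (Real.sqrt s + Real.sqrt (s - 1))

lemma G_one : G 1 = 0 := by simp [G]

lemma hasDerivAt_G {s : ℝ} (hs : 1 < s) :
    HasDerivAt G (s / Real.sqrt (s * (s - 1))) s := by
  have hs0 : (0:ℝ) < s := lt_trans one_pos hs
  have hs1 : (0:ℝ) < s - 1 := by linarith
  have hprod : (0:ℝ) < s * (s - 1) := mul_pos hs0 hs1
  have hA : (0:ℝ) < Real.sqrt s := Real.sqrt_pos.2 hs0
  have hB : (0:ℝ) < Real.sqrt (s - 1) := Real.sqrt_pos.2 hs1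
  have h1 : HasDerivAt (fun x : ℝ => x * (x - 1)) (2 * s - 1) s := by
    have := (hasDerivAt_id s).mul ((hasDerivAt_id s).sub_const 1)
    refine HasDerivAt.congr_deriv this ?_
    simp; ring
  have h2 := h1.sqrt (ne_of_gt hprod)
  have h3 : HasDerivAt (fun x : ℝ => Real.sqrt x) (1 / (2 * Real.sqrt s)) s :=
    Real.hasDerivAt_sqrt (ne_of_gt hs0)
  have h4 : HasDerivAt (fun x : ℝ => Real.sqrt (x - 1)) (1 / (2 * Real.sqrt (s - 1))) s := by
    simpa using ((hasDerivAt_id s).sub_const 1).sqrt (ne_of_gt hs1)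
  have h5 := (h3.add h4).log (ne_of_gt (by simp only [Pi.add_apply]; linarith))
  have h6 := h2.add h5
  refine HasDerivAt.congr_deriv h6 ?_
  have hAB : Real.sqrt (s * (s - 1)) = Real.sqrt s * Real.sqrt (s - 1) :=
    Real.sqrt_mul hs0.le _
  have hA2 : Real.sqrt s * Real.sqrt s = s := Real.mul_self_sqrt hs0.le
  have hB2 : Real.sqrt (s - 1) * Real.sqrt (s - 1) = s - 1 := Real.mul_self_sqrt hs1.le
  simp only [Pi.add_apply]
  rw [hAB]
  field_simp
  nlinarith [hA2, hB2, mul_pos hA hB]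

lemma G_contOn : ContinuousOn G (Set.Ici 1) := by
  apply ContinuousOn.add
  · exact (Real.continuous_sqrt.comp (continuous_id.mul (continuous_id.sub continuous_const))).continuousOn
  · apply ContinuousOn.log
    · exact ((Real.continuous_sqrt).continuousOn.add
        ((Real.continuous_sqrt.comp (continuous_id.sub continuous_const)).continuousOn))
    · intro s hs
      have h1 : (1:ℝ) ≤ s := hs
      have : (0:ℝ) < Real.sqrt s := Real.sqrt_pos.2 (by linarith)
      positivity

lemma G_strictMono : StrictMonoOn G (Set.Ici 1) := by
  apply strictMonoOn_of_deriv_pos (convex_Ici 1) G_contOn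
  intro s hs
  rw [interior_Ici] at hs
  replace hs : (1:ℝ) < s := hs
  rw [(hasDerivAt_G hs).deriv]
  have hs0 : (0:ℝ) < s := lt_trans one_pos hs
  have : (0:ℝ) < Real.sqrt (s * (s-1)) := Real.sqrt_pos.2 (mul_pos hs0 (by linarith))
  positivity

lemma G_pos {s : ℝ} (hs : 1 < s) : 0 < G s := by
  have := G_strictMono (Set.self_mem_Ici) (le_of_lt hs) hs
  rwa [G_one] at this

lemma H_gt_one (H : ℝ → ℝ)
    (hH1 : ∀ x : ℝ, 0 ≤ x → 1 ≤ H x ∧ G (H x) = x)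
    {x : ℝ} (hx : 0 < x) : 1 < H x := by
  rcases (hH1 x hx.le).1.lt_or_eq with h | h
  · exact h
  · exfalso
    have := (hH1 x hx.le).2
    rw [← h, G_one] at this
    linarith

lemma hasDerivAt_H (H : ℝ → ℝ)
    (hH1 : ∀ x : ℝ, 0 ≤ x → 1 ≤ H x ∧ G (H x) = x)
    (hH2 : ∀ s : ℝ, 1 ≤ s → H (G s) = s)
    {x : ℝ} (hx : 0 < x) :
    HasDerivAt H (Real.sqrt (1 - 1 / H x)) x := by
  have hgt : 1 < H x := H_gt_one H hH1 hx
  have hmono : MonotoneOn H (Set.Ioi 0) := by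
    intro u hu v hv huv
    have h1u := hH1 u (le_of_lt hu)
    have h1v := hH1 v (le_of_lt hv)
    have := (G_strictMono.le_iff_le (Set.mem_Ici.2 h1u.1) (Set.mem_Ici.2 h1v.1)).mp
      (by rw [h1u.2, h1v.2]; exact huv)
    exact this
  have hcont : ContinuousAt H x := by
    apply continuousAt_of_monotoneOn_of_image_mem_nhds hmono (Ioi_mem_nhds hx)
    apply Filter.mem_of_superset (Ioi_mem_nhds hgt)
    intro t ht
    exact ⟨G t, G_pos ht, hH2 t (le_of_lt ht)⟩
  have hfg : ∀ᶠ y in nhds x, G (H y) = y :=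
    (eventually_gt_nhds hx).mono fun y hy => (hH1 y hy.le).2
  have hne : H x / Real.sqrt (H x * (H x - 1)) ≠ 0 := by
    have h0 : (0:ℝ) < H x := lt_trans one_pos hgt
    have : (0:ℝ) < Real.sqrt (H x * (H x - 1)) :=
      Real.sqrt_pos.2 (mul_pos h0 (by linarith))
    positivity
  have key := (hasDerivAt_G hgt).of_local_left_inverse hcont hne hfg
  refine HasDerivAt.congr_deriv key ?_
  have h0 : (0:ℝ) < H x := lt_trans one_pos hgt
  have hA : (0:ℝ) < Real.sqrt (H x) := Real.sqrt_pos.2 h0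
  have hB : (0:ℝ) < Real.sqrt (H x - 1) := Real.sqrt_pos.2 (by linarith)
  have hA2 : Real.sqrt (H x) * Real.sqrt (H x) = H x := Real.mul_self_sqrt h0.le
  rw [show (1 - 1 / H x) = (H x - 1) / H x by field_simp,
    Real.sqrt_div (by linarith : (0:ℝ) ≤ H x - 1),
    Real.sqrt_mul h0.le, inv_div]
  field_simp
  nlinarith [hA2]

theorem stmt9 (H : ℝ → ℝ)
    (hH1 : ∀ x : ℝ, 0 ≤ x → 1 ≤ H x ∧ G (H x) = x)
    (hH2 : ∀ s : ℝ, 1 ≤ s → H (G s) = s)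
    (q a : ℝ) (hq : 0 < q) (ha : 0 < a)
    (R V : ℝ → ℝ)
    (hR : ∀ θ : ℝ, R θ = (q / a ^ 2) * H (a ^ 2 * |θ| / q))
    (hV : ∀ θ : ℝ, V θ = Real.sign θ * Real.sqrt (a ^ 2 - q / R θ)) :
    (∀ θ : ℝ, θ ≠ 0 →
        HasDerivAt R (V θ / a) θ ∧ HasDerivAt V (q / (2 * a * (R θ) ^ 2)) θ) ∧
      ∀ θ₀ t : ℝ, θ₀ + t * a ≠ 0 →
        HasDerivAt (fun s => R (θ₀ + s * a)) (V (θ₀ + t * a)) t ∧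
          HasDerivAt (fun s => V (θ₀ + s * a)) (q / (2 * (R (θ₀ + t * a)) ^ 2)) t := by
  have ha2 : (0:ℝ) < a ^ 2 := by positivity
  have hc : (0:ℝ) < q / a ^ 2 := by positivity
  -- main facts for positive θ
  have pos : ∀ θ : ℝ, 0 < θ →
      HasDerivAt R (V θ / a) θ ∧ HasDerivAt V (q / (2 * a * (R θ) ^ 2)) θ := by
    intro θ hθ
    set u : ℝ := a ^ 2 * θ / q with hu_def
    have hu : 0 < u := by positivity
    have hHu : 1 < H u := H_gt_one H hH1 hu
    have hHu0 : 0 < H u := lt_trans one_pos hHu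
    have hHder := hasDerivAt_H H hH1 hH2 hu
    have hRθ : R θ = (q / a ^ 2) * H u := by rw [hR θ, abs_of_pos hθ]
    have hRpos : 0 < R θ := by rw [hRθ]; positivity
    have hqR : q / R θ = a ^ 2 / H u := by
      rw [hRθ]; field_simp
    have hsub : a ^ 2 - q / R θ = a ^ 2 * (1 - 1 / H u) := by
      rw [hqR]; field_simp
    have hsubpos : 0 < a ^ 2 - q / R θ := by
      rw [hsub]
      have : 0 < 1 - 1 / H u := by
        have : 1 / H u < 1 := by rw [div_lt_one hHu0]; exact hHu
        linarith
      positivity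
    have hVθ : V θ = a * Real.sqrt (1 - 1 / H u) := by
      rw [hV θ, Real.sign_of_pos hθ, one_mul, hsub, Real.sqrt_mul (le_of_lt ha2),
        Real.sqrt_sq ha.le]
    have hVpos : 0 < V θ := by
      rw [hVθ]
      have : 0 < 1 - 1 / H u := by
        have : 1 / H u < 1 := by rw [div_lt_one hHu0]; exact hHu
        linarith
      positivity
    -- derivative of R
    have hinner : HasDerivAt (fun θ' : ℝ => a ^ 2 * θ' / q) (a ^ 2 / q) θ := by
      simpa using ((hasDerivAt_id θ).const_mul (a ^ 2)).div_const q
    have hcomp : HasDerivAt (fun θ' : ℝ => (q / a ^ 2) * H (a ^ 2 * θ' / q))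
        ((q / a ^ 2) * (Real.sqrt (1 - 1 / H u) * (a ^ 2 / q))) θ :=
      (hHder.comp θ hinner).const_mul _
    have heqR : R =ᶠ[nhds θ] fun θ' : ℝ => (q / a ^ 2) * H (a ^ 2 * θ' / q) :=
      (eventually_gt_nhds hθ).mono fun y hy => by rw [hR y, abs_of_pos hy]
    have hRder : HasDerivAt R (V θ / a) θ := by
      have := hcomp.congr_of_eventuallyEq heqR
      refine HasDerivAt.congr_deriv this ?_
      rw [hVθ]
      field_simp
    refine ⟨hRder, ?_⟩
    -- derivative of V
    have hRne : R θ ≠ 0 := ne_of_gt hRpos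
    have hdiv : HasDerivAt (fun θ' : ℝ => a ^ 2 - q / R θ')
        (-((0 * R θ - q * (V θ / a)) / R θ ^ 2)) θ :=
      (((hasDerivAt_const θ q).div hRder hRne)).const_sub (a ^ 2)
    have hsq := hdiv.sqrt (ne_of_gt hsubpos)
    have hsqrtV : Real.sqrt (a ^ 2 - q / R θ) = V θ := by
      rw [hV θ, Real.sign_of_pos hθ, one_mul]
    have heqV : V =ᶠ[nhds θ] fun θ' : ℝ => Real.sqrt (a ^ 2 - q / R θ') :=
      (eventually_gt_nhds hθ).mono fun y hy => by
        rw [hV y, Real.sign_of_pos hy, one_mul]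
    have := hsq.congr_of_eventuallyEq heqV
    refine HasDerivAt.congr_deriv this ?_
    rw [hsqrtV]
    field_simp
    ring
  -- evenness / oddness
  have Reven : ∀ y : ℝ, R (-y) = R y := fun y => by rw [hR, hR, abs_neg]
  have Vodd : ∀ y : ℝ, V (-y) = -V y := fun y => by
    rw [hV, hV, Reven, Real.sign_neg, neg_mul]
  have part1 : ∀ θ : ℝ, θ ≠ 0 →
      HasDerivAt R (V θ / a) θ ∧ HasDerivAt V (q / (2 * a * (R θ) ^ 2)) θ := by
    intro θ hθ
    rcases hθ.lt_or_gt with hneg | hpos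
    · have hp := pos (-θ) (by linarith)
      have hfunR : (fun y : ℝ => R (-y)) = R := funext Reven
      have h1 : HasDerivAt R (V (-θ) / a * (-1)) θ := by
        have := hp.1.comp θ (hasDerivAt_neg θ)
        rwa [Function.comp_def, hfunR] at this
      have h2 : HasDerivAt (fun y : ℝ => V (-y)) (q / (2 * a * (R (-θ)) ^ 2) * (-1)) θ := by
        have := hp.2.comp θ (hasDerivAt_neg θ)
        rwa [Function.comp_def] at this
      constructor
      · refine HasDerivAt.congr_deriv h1 ?_
        rw [Vodd]
        field_simp
      · have h3 : HasDerivAt (fun y : ℝ => -V (-y)) _ θ := h2.neg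
        have hfunV : (fun y : ℝ => -V (-y)) = V := funext fun y => by rw [Vodd, neg_neg]
        rw [hfunV] at h3
        refine HasDerivAt.congr_deriv h3 ?_
        rw [Reven]
        ring
    · exact pos θ hpos
  refine ⟨part1, ?_⟩
  intro θ₀ t hne
  have haff : HasDerivAt (fun s : ℝ => θ₀ + s * a) a t := by
    simpa using ((hasDerivAt_id t).mul_const a).const_add θ₀
  have hp := part1 (θ₀ + t * a) hne
  constructor
  · have := hp.1.comp t haff
    rw [Function.comp_def] at this
    refine HasDerivAt.congr_deriv this ?_
    field_simp
  · have := hp.2.comp t haff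
    rw [Function.comp_def] at this
    refine HasDerivAt.congr_deriv this ?_
    rw [div_mul_eq_mul_div, mul_comm q a,
      show 2 * a * R (θ₀ + t * a) ^ 2 = a * (2 * R (θ₀ + t * a) ^ 2) by ring,
      mul_div_mul_left _ _ (ne_of_gt ha)]
end

section
/- With q>0 fixed, define on ℝ₊*×ℝ: 𝒜(r,v)=√(v²+q/r), r_min(r,v)= q/(v²+q/r), and Θ(r,v)= sign(v)·r_min·G(r/r_min) for v≠0, Θ(r,0)=0. Define on ℝ×ℝ₊*: R(θ,a) = (q/a²)·H(a²|θ|/q), V(θ,a) = sign(θ)·√(a² − q/R(θ,a)). Then (Θ,𝒜) and (R,V) are mutually inverse bijections between {(r,v) : r>0} and {(θ,a) : a>0}. -/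
lemma sqrt_ge_one {s : ℝ} (hs : 1 ≤ s) : (1:ℝ) ≤ Real.sqrt s := by
  rw [show (1:ℝ) = Real.sqrt 1 by simp]
  exact Real.sqrt_le_sqrt hs

lemma G_nonneg {s : ℝ} (hs : 1 ≤ s) : 0 ≤ G s := by
  have h1 := sqrt_ge_one hs
  have h2 : 0 ≤ Real.log (Real.sqrt s + Real.sqrt (s - 1)) := by
    apply Real.log_nonneg
    have := Real.sqrt_nonneg (s - 1)
    linarith
  have := Real.sqrt_nonneg (s * (s - 1))
  unfold G; linarith

lemma abs_sign_ne {v : ℝ} (hv : v ≠ 0) : |Real.sign v| = 1 := by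
  rcases lt_or_gt_of_ne hv with h | h
  · rw [Real.sign_of_neg h]; simp
  · rw [Real.sign_of_pos h]; simp

theorem stmt10 (H : ℝ → ℝ)
    (hH1 : ∀ x : ℝ, 0 ≤ x → 1 ≤ H x ∧ G (H x) = x)
    (hH2 : ∀ s : ℝ, 1 ≤ s → H (G s) = s)
    (q : ℝ) (hq : 0 < q)
    (A Θ : ℝ → ℝ → ℝ) (R V : ℝ → ℝ → ℝ)
    (hA : ∀ r v : ℝ, A r v = Real.sqrt (v ^ 2 + q / r))
    (hΘ : ∀ r v : ℝ,
      Θ r v = Real.sign v * (q / (v ^ 2 + q / r)) * G (r / (q / (v ^ 2 + q / r))))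
    (hR : ∀ θ a : ℝ, R θ a = (q / a ^ 2) * H (a ^ 2 * |θ| / q))
    (hV : ∀ θ a : ℝ, V θ a = Real.sign θ * Real.sqrt (a ^ 2 - q / R θ a)) :
    (∀ r v : ℝ, 0 < r →
        0 < A r v ∧ R (Θ r v) (A r v) = r ∧ V (Θ r v) (A r v) = v) ∧
      ∀ θ a : ℝ, 0 < a →
        0 < R θ a ∧ Θ (R θ a) (V θ a) = θ ∧ A (R θ a) (V θ a) = a := by
  have hH0 : H 0 = 1 := by
    have := hH2 1 le_rfl
    rwa [G_one] at this
  constructor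
  · intro r v hr
    have hqr : 0 < q / r := div_pos hq hr
    have hb : 0 < v ^ 2 + q / r := by positivity
    set b := v ^ 2 + q / r with hbdef
    have ha2 : (A r v) ^ 2 = b := by
      rw [hA]; exact Real.sq_sqrt hb.le
    have hApos : 0 < A r v := by rw [hA]; exact Real.sqrt_pos.2 hb
    have hqb : 0 < q / b := div_pos hq hb
    have hs : r / (q / b) = (r * v ^ 2 + q) / q := by
      rw [div_div_eq_mul_div]
      congr 1
      field_simp [hbdef]
      rw [hbdef]; field_simp
    have hs1 : 1 ≤ r / (q / b) := by
      rw [hs, le_div_iff₀ hq]; nlinarith [sq_nonneg v]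
    refine ⟨hApos, ?_, ?_⟩
    · -- R (Θ r v) (A r v) = r
      rcases eq_or_ne v 0 with hv | hv
      · have hθ : Θ r v = 0 := by rw [hΘ, hv, Real.sign_zero]; ring
        rw [hR, hθ, ha2, abs_zero, mul_zero, zero_div, hH0, mul_one]
        rw [hbdef, hv]
        field_simp
        ring
      · have hsgt : 1 < r / (q / b) := by
          rw [hs, lt_div_iff₀ hq]
          have : 0 < r * v ^ 2 := by positivity
          linarith
        have hG : 0 < G (r / (q / b)) := G_pos hsgt
        have hθabs : |Θ r v| = q / b * G (r / (q / b)) := by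
          rw [hΘ, ← hbdef, abs_mul, abs_mul, abs_sign_ne hv,
            abs_of_pos hqb, abs_of_pos hG, one_mul]
        rw [hR, ha2, hθabs]
        have harg : b * (q / b * G (r / (q / b))) / q = G (r / (q / b)) := by
          field_simp
        rw [harg, hH2 _ hs1]
        rw [mul_comm, div_mul_cancel₀ _ (ne_of_gt hqb)]
    · -- V (Θ r v) (A r v) = v
      rcases eq_or_ne v 0 with hv | hv
      · have hθ : Θ r v = 0 := by rw [hΘ, hv, Real.sign_zero]; ring
        rw [hV, hθ, Real.sign_zero, zero_mul, hv]
      · have hsgt : 1 < r / (q / b) := by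
          rw [hs, lt_div_iff₀ hq]
          have : 0 < r * v ^ 2 := by positivity
          linarith
        have hG : 0 < G (r / (q / b)) := G_pos hsgt
        have hRr : R (Θ r v) (A r v) = r := by
          have hθabs : |Θ r v| = q / b * G (r / (q / b)) := by
            rw [hΘ, ← hbdef, abs_mul, abs_mul, abs_sign_ne hv,
              abs_of_pos hqb, abs_of_pos hG, one_mul]
          rw [hR, ha2, hθabs]
          have harg : b * (q / b * G (r / (q / b))) / q = G (r / (q / b)) := by
            field_simp
          rw [harg, hH2 _ hs1]
          rw [mul_comm, div_mul_cancel₀ _ (ne_of_gt hqb)]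
        have hsign : Real.sign (Θ r v) = Real.sign v := by
          rw [hΘ, ← hbdef]
          rcases lt_or_gt_of_ne hv with h | h
          · rw [Real.sign_of_neg h]
            have : (-1 : ℝ) * (q / b) * G (r / (q / b)) < 0 := by nlinarith
            rw [Real.sign_of_neg this]
          · rw [Real.sign_of_pos h]
            have : (1 : ℝ) * (q / b) * G (r / (q / b)) > 0 := by nlinarith
            rw [Real.sign_of_pos this]
        rw [hV, hRr, hsign, ha2]
        have : b - q / r = v ^ 2 := by rw [hbdef]; ring
        rw [this, Real.sqrt_sq_eq_abs]
        rcases lt_or_gt_of_ne hv with h | h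
        · rw [Real.sign_of_neg h, abs_of_neg h]; ring
        · rw [Real.sign_of_pos h, abs_of_pos h]; ring
  · intro θ a ha
    have ha2 : 0 < a ^ 2 := by positivity
    have hx : 0 ≤ a ^ 2 * |θ| / q := by positivity
    obtain ⟨hHx1, hGHx⟩ := hH1 _ hx
    have hHxpos : 0 < H (a ^ 2 * |θ| / q) := lt_of_lt_of_le one_pos hHx1
    have hRpos : 0 < R θ a := by
      rw [hR]; positivity
    have hqR : q / R θ a = a ^ 2 / H (a ^ 2 * |θ| / q) := by
      rw [hR]; field_simp
    have hsub : a ^ 2 - q / R θ a = a ^ 2 * (H (a ^ 2 * |θ| / q) - 1) / H (a ^ 2 * |θ| / q) := by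
      rw [hqR]; field_simp
    have hsubnn : 0 ≤ a ^ 2 - q / R θ a := by
      rw [hsub]
      apply div_nonneg _ hHxpos.le
      nlinarith
    refine ⟨hRpos, ?_, ?_⟩
    · -- Θ (R θ a) (V θ a) = θ
      rcases eq_or_ne θ 0 with hθ | hθ
      · have hV0 : V θ a = 0 := by rw [hV, hθ, Real.sign_zero, zero_mul]
        rw [hV0, hΘ, Real.sign_zero, hθ]; ring
      · have hθabs : 0 < |θ| := abs_pos.2 hθ
        have hxpos : 0 < a ^ 2 * |θ| / q := by positivity
        have hHgt1 : 1 < H (a ^ 2 * |θ| / q) := by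
          rcases lt_or_eq_of_le hHx1 with h | h
          · exact h
          · exfalso
            rw [← h, G_one] at hGHx
            exact absurd hGHx.symm (ne_of_gt hxpos)
        have hsubpos : 0 < a ^ 2 - q / R θ a := by
          rw [hsub]
          apply div_pos _ hHxpos
          nlinarith
        have hsqrtpos : 0 < Real.sqrt (a ^ 2 - q / R θ a) := Real.sqrt_pos.2 hsubpos
        have hsignV : Real.sign (V θ a) = Real.sign θ := by
          rw [hV]
          rcases lt_or_gt_of_ne hθ with h | h
          · rw [Real.sign_of_neg h]
            have : (-1 : ℝ) * Real.sqrt (a ^ 2 - q / R θ a) < 0 := by nlinarith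
            rw [Real.sign_of_neg this]
          · rw [Real.sign_of_pos h]
            have : (1 : ℝ) * Real.sqrt (a ^ 2 - q / R θ a) > 0 := by nlinarith
            rw [Real.sign_of_pos this]
        have hV2 : (V θ a) ^ 2 = a ^ 2 - q / R θ a := by
          rw [hV, mul_pow, Real.sq_sqrt hsubnn]
          rcases lt_or_gt_of_ne hθ with h | h
          · rw [Real.sign_of_neg h]; ring
          · rw [Real.sign_of_pos h]; ring
        have hkey : (V θ a) ^ 2 + q / R θ a = a ^ 2 := by rw [hV2]; ring
        rw [hΘ, hkey, hsignV]
        have h1 : q / (q / a ^ 2) = a ^ 2 := by field_simp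
        have h2 : R θ a / (q / a ^ 2) = H (a ^ 2 * |θ| / q) := by
          rw [hR]; field_simp
        rw [show q / a ^ 2 = q / (a ^ 2) from rfl] at *
        rw [h2, hGHx]
        rcases lt_or_gt_of_ne hθ with h | h
        · rw [Real.sign_of_neg h]
          rw [abs_of_neg h]
          field_simp
        · rw [Real.sign_of_pos h]
          rw [abs_of_pos h]
          field_simp
      -- A (R θ a) (V θ a) = a
    · rcases eq_or_ne θ 0 with hθ | hθ
      · have hV0 : V θ a = 0 := by rw [hV, hθ, Real.sign_zero, zero_mul]
        have hR0 : R θ a = q / a ^ 2 := by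
          rw [hR, hθ, abs_zero, mul_zero, zero_div, hH0, mul_one]
        rw [hA, hV0, hR0]
        have : q / (q / a ^ 2) = a ^ 2 := by field_simp
        rw [this]
        simp [Real.sqrt_sq ha.le]
      · have hV2 : (V θ a) ^ 2 = a ^ 2 - q / R θ a := by
          rw [hV, mul_pow, Real.sq_sqrt hsubnn]
          rcases lt_or_gt_of_ne hθ with h | h
          · rw [Real.sign_of_neg h]; ring
          · rw [Real.sign_of_pos h]; ring
        rw [hA, hV2]
        have : a ^ 2 - q / R θ a + q / R θ a = a ^ 2 := by ring
        rw [this, Real.sqrt_sq ha.le]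
end

section
/- Fix q>0 and R(θ,a) = (q/a²) H(a²|θ|/q). Then for a>0 and θ≠0, ∂_a R(θ,a) = (q/a³)·( ∫₀^{a²|θ|/q} s/H(s)² ds − 2 ). -/
lemma G_deriv {s : ℝ} (hs : 1 < s) :
    HasStrictDerivAt G (s / Real.sqrt (s * (s - 1))) s := by
  have hs0 : (0:ℝ) < s := by linarith
  have hs1 : (0:ℝ) < s - 1 := by linarith
  have h1 : (0:ℝ) < s * (s - 1) := by nlinarith
  have hA : HasStrictDerivAt (fun t : ℝ => t * (t - 1)) (2 * s - 1) s := by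
    have hb : HasStrictDerivAt (fun t : ℝ => t - 1) 1 s := by
      have := (hasStrictDerivAt_id s).sub (hasStrictDerivAt_const s 1)
      refine this.congr_deriv ?_
      norm_num
    have := (hasStrictDerivAt_id s).mul hb
    refine this.congr_deriv ?_
    simp only [id]; ring
  have hS : HasStrictDerivAt (fun t : ℝ => Real.sqrt (t * (t - 1)))
      ((2 * s - 1) / (2 * Real.sqrt (s * (s - 1)))) s := hA.sqrt h1.ne'
  have h2 : HasStrictDerivAt (fun t : ℝ => Real.sqrt (t - 1)) (1 / (2 * Real.sqrt (s - 1))) s := by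
    have hb : HasStrictDerivAt (fun t : ℝ => t - 1) 1 s := by
      have := (hasStrictDerivAt_id s).sub (hasStrictDerivAt_const s 1)
      refine this.congr_deriv ?_
      norm_num
    exact hb.sqrt hs1.ne'
  have hu : HasStrictDerivAt (fun t : ℝ => Real.sqrt t + Real.sqrt (t - 1))
      (1 / (2 * Real.sqrt s) + 1 / (2 * Real.sqrt (s - 1))) s :=
    (Real.hasStrictDerivAt_sqrt hs0.ne').add h2
  have hpos : (0:ℝ) < Real.sqrt s + Real.sqrt (s - 1) :=
    add_pos_of_pos_of_nonneg (Real.sqrt_pos.2 hs0) (Real.sqrt_nonneg _)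
  have hlog : HasStrictDerivAt (fun t : ℝ => Real.log (Real.sqrt t + Real.sqrt (t - 1)))
      ((1 / (2 * Real.sqrt s) + 1 / (2 * Real.sqrt (s - 1))) / (Real.sqrt s + Real.sqrt (s - 1)))
      s := hu.log hpos.ne'
  have := hS.add hlog
  refine this.congr_deriv ?_
  have hu0 : (0:ℝ) < Real.sqrt s := Real.sqrt_pos.2 hs0
  have hv0 : (0:ℝ) < Real.sqrt (s - 1) := Real.sqrt_pos.2 hs1
  have husq : Real.sqrt s ^ 2 = s := Real.sq_sqrt hs0.le
  have hvsq : Real.sqrt (s - 1) ^ 2 = s - 1 := Real.sq_sqrt hs1.le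
  rw [Real.sqrt_mul hs0.le]
  set u := Real.sqrt s with hu'
  set v := Real.sqrt (s - 1) with hv'
  field_simp
  nlinarith [husq, hvsq, mul_pos hu0 hv0, sq_nonneg (u - v), sq_nonneg (u + v)]

lemma G_deriv_inv {s : ℝ} (hs : 1 < s) :
    (s / Real.sqrt (s * (s - 1)))⁻¹ = Real.sqrt (1 - 1 / s) := by
  have hs0 : (0:ℝ) < s := by linarith
  rw [inv_div]
  have h1 : 1 - 1 / s = s * (s - 1) / s ^ 2 := by field_simp
  rw [h1, Real.sqrt_div (by nlinarith : (0:ℝ) ≤ s * (s - 1)), Real.sqrt_sq hs0.le]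
theorem stmt13 (H : ℝ → ℝ)
    (hH1 : ∀ x : ℝ, 0 ≤ x → 1 ≤ H x ∧ G (H x) = x)
    (hH2 : ∀ s : ℝ, 1 ≤ s → H (G s) = s)
    (q : ℝ) (hq : 0 < q)
    (R : ℝ → ℝ → ℝ)
    (hR : ∀ θ a : ℝ, R θ a = (q / a ^ 2) * H (a ^ 2 * |θ| / q)) :
    ∀ a : ℝ, 0 < a → ∀ θ : ℝ, θ ≠ 0 →
      HasDerivAt (fun α => R θ α)
        ((q / a ^ 3) * ((∫ s in (0 : ℝ)..(a ^ 2 * |θ| / q), s / (H s) ^ 2) - 2)) a := by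
  intro a ha θ hθ
  have hq' : q ≠ 0 := hq.ne'
  have hθ' : (0:ℝ) < |θ| := abs_pos.2 hθ
  set x₀ : ℝ := a ^ 2 * |θ| / q with hx₀def
  have hx₀ : 0 < x₀ := by positivity
  -- basic facts about H
  have hH0 : H 0 = 1 := by
    obtain ⟨h1, h2⟩ := hH1 0 le_rfl
    rcases eq_or_lt_of_le h1 with h | h
    · exact h.symm
    · have := G_pos h
      linarith [h2 ▸ this]
  have hHgt : ∀ x : ℝ, 0 < x → 1 < H x := by
    intro x hx
    obtain ⟨h1, h2⟩ := hH1 x hx.le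
    rcases eq_or_lt_of_le h1 with h | h
    · rw [← h, G_one] at h2; linarith
    · exact h
  -- derivative of H
  have hHd : ∀ x : ℝ, 0 < x → HasDerivAt H (Real.sqrt (1 - 1 / H x)) x := by
    intro x hx
    have hs := hHgt x hx
    have hGH := (hH1 x hx.le).2
    have hne : H x / Real.sqrt (H x * (H x - 1)) ≠ 0 := by
      have h1 : (0:ℝ) < H x * (H x - 1) := by nlinarith
      exact div_ne_zero (by linarith) (Real.sqrt_pos.2 h1).ne'
    have hev : ∀ᶠ s in nhds (H x), H (G s) = s := by
      filter_upwards [eventually_gt_nhds hs] with s hs'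
      exact hH2 s hs'.le
    have hd := (G_deriv hs).to_local_left_inverse hne hev
    rw [hGH, G_deriv_inv hs] at hd
    exact hd.hasDerivAt
  -- continuity of H on [0, x₀]
  have hHcont : ContinuousOn H (Set.Icc 0 x₀) := by
    intro y hy
    rcases eq_or_lt_of_le hy.1 with h0 | h0
    · rw [← h0]
      rw [Metric.continuousWithinAt_iff]
      intro ε hε
      refine ⟨G (1 + ε / 2), G_pos (by linarith), ?_⟩
      intro z hz hdist
      have hz0 : (0:ℝ) ≤ z := hz.1
      have h1 : 1 ≤ H z := (hH1 z hz0).1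
      rw [Real.dist_eq, sub_zero, abs_of_nonneg hz0] at hdist
      have h2 : H z ≤ 1 + ε / 2 := by
        by_contra h
        push_neg at h
        have hmono := G_strictMono (Set.mem_Ici.2 (by linarith : (1:ℝ) ≤ 1 + ε / 2))
          (Set.mem_Ici.2 (by linarith : (1:ℝ) ≤ H z)) h
        rw [(hH1 z hz0).2] at hmono
        linarith
      rw [Real.dist_eq, hH0, abs_of_nonneg (by linarith)]
      linarith
    · exact (hHd y h0).continuousAt.continuousWithinAt
  have hHne : ∀ y ∈ Set.Icc (0:ℝ) x₀, H y ≠ 0 := fun y hy => by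
    have := (hH1 y hy.1).1; linarith
  -- integrability of the integrand
  have hIcont : ContinuousOn (fun s => s / H s ^ 2) (Set.Icc 0 x₀) :=
    continuousOn_id.div (hHcont.pow 2) (fun y hy => pow_ne_zero 2 (hHne y hy))
  have hInt : IntervalIntegrable (fun s => s / H s ^ 2) MeasureTheory.volume 0 x₀ := by
    apply ContinuousOn.intervalIntegrable
    rwa [Set.uIcc_of_le hx₀.le]
  -- the antiderivative
  have hFcont : ContinuousOn (fun y => 2 * y * Real.sqrt (1 - 1 / H y) - 2 * H y + 2)
      (Set.Icc 0 x₀) := by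
    have hinner : ContinuousOn (fun y => 1 - 1 / H y) (Set.Icc 0 x₀) :=
      continuousOn_const.sub (continuousOn_const.div hHcont hHne)
    have hsq : ContinuousOn (fun y => Real.sqrt (1 - 1 / H y)) (Set.Icc 0 x₀) :=
      Real.continuous_sqrt.comp_continuousOn hinner
    exact (((continuousOn_const.mul continuousOn_id).mul hsq).sub
      (continuousOn_const.mul hHcont)).add continuousOn_const
  have hFd : ∀ y ∈ Set.Ioo (0:ℝ) x₀,
      HasDerivAt (fun t => 2 * t * Real.sqrt (1 - 1 / H t) - 2 * H t + 2) (y / H y ^ 2) y := by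
    intro y hy
    have hy0 := hy.1
    have hs := hHgt y hy0
    have hH' := hHd y hy0
    have hHpos : (0:ℝ) < H y := by linarith
    have hvpos : (0:ℝ) < 1 - 1 / H y := by
      have : 1 / H y < 1 := by rw [div_lt_one hHpos]; exact hs
      linarith
    have hwpos : (0:ℝ) < Real.sqrt (1 - 1 / H y) := Real.sqrt_pos.2 hvpos
    have hv : HasDerivAt (fun t => 1 - 1 / H t) (Real.sqrt (1 - 1 / H y) / H y ^ 2) y := by
      have hdiv := (hasDerivAt_const y (1:ℝ)).div hH' (by linarith : H y ≠ 0)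
      have := (hasDerivAt_const y (1:ℝ)).sub hdiv
      refine this.congr_deriv ?_
      field_simp
      ring
    have hw : HasDerivAt (fun t => Real.sqrt (1 - 1 / H t)) (1 / (2 * H y ^ 2)) y := by
      have := hv.sqrt hvpos.ne'
      convert this using 1
      rw [eq_div_iff (by positivity : (2 : ℝ) * Real.sqrt (1 - 1 / H y) ≠ 0)]
      field_simp
    have h2t : HasDerivAt (fun t : ℝ => 2 * t) 2 y := by
      simpa using (hasDerivAt_id y).const_mul 2
    have h2yw := h2t.mul hw
    have hHm := hH'.const_mul 2
    have := (h2yw.sub hHm).add_const 2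
    refine this.congr_deriv ?_
    field_simp
    ring
  have hint := intervalIntegral.integral_eq_sub_of_hasDeriv_right_of_le hx₀.le hFcont
      (fun y hy => (hFd y hy).hasDerivWithinAt) hInt
  -- assemble
  have hR' : (fun α => R θ α) = fun α => (q / α ^ 2) * H (α ^ 2 * |θ| / q) :=
    funext fun α => hR θ α
  rw [hR']
  have g1 : HasDerivAt (fun α : ℝ => q / α ^ 2) (-(2 * q) / a ^ 3) a := by
    have := (hasDerivAt_const a q).div (hasDerivAt_pow 2 a) (pow_ne_zero 2 ha.ne')
    refine this.congr_deriv ?_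
    field_simp
    ring
  have g2 : HasDerivAt (fun α : ℝ => α ^ 2 * |θ| / q) (2 * a * |θ| / q) a := by
    have := ((hasDerivAt_pow 2 a).mul_const |θ|).div_const q
    refine this.congr_deriv ?_
    ring
  have g3 : HasDerivAt H (Real.sqrt (1 - 1 / H x₀)) x₀ := hHd x₀ hx₀
  have g4 : HasDerivAt (fun α : ℝ => H (α ^ 2 * |θ| / q))
      (Real.sqrt (1 - 1 / H x₀) * (2 * a * |θ| / q)) a := g3.comp a g2
  have g5 := g1.mul g4
  refine g5.congr_deriv ?_
  rw [hint]
  rw [hH0]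
  rw [hx₀def]
  have hane : a ≠ 0 := ha.ne'
  field_simp
  ring
end

section
/- There is a constant C>0 such that for all x ≥ 0, ∫₀^x s/H(s)² ds ≤ C·ln(1 + H(x)), where H = G⁻¹ as above. Consequently |∂_a R(θ,a)| ≤ C' (q/a³)·ln(1 + (a²/q) R(θ,a)) for the Kepler position function R(θ,a) = (q/a²)H(a²|θ|/q). -/
lemma sqrt_mul_le {s : ℝ} (hs : 1 ≤ s) : Real.sqrt (s * (s-1)) ≤ s := by
  have := Real.sqrt_le_sqrt (show s*(s-1) ≤ s^2 by nlinarith)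
  rwa [Real.sqrt_sq (by linarith)] at this

lemma G_le_two_mul {s : ℝ} (hs : 1 ≤ s) : G s ≤ 2 * s := by
  have h1 := sqrt_mul_le hs
  have h2 : Real.log (Real.sqrt s + Real.sqrt (s-1)) ≤ s := by
    have hss : Real.sqrt s ≤ s := by
      have := Real.sqrt_le_sqrt (show s ≤ s^2 by nlinarith)
      rwa [Real.sqrt_sq (by linarith)] at this
    have hb : Real.sqrt s + Real.sqrt (s-1) ≤ 2 * s := by
      have h3 : Real.sqrt (s-1) ≤ s :=
        le_trans (Real.sqrt_le_sqrt (by linarith)) hss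
      linarith
    calc Real.log (Real.sqrt s + Real.sqrt (s-1)) ≤ Real.log (2*s) :=
      Real.log_le_log (by positivity) hb
    _ = Real.log 2 + Real.log s := Real.log_mul (by norm_num) (by linarith)
    _ ≤ 1 + (s - 1) := by
        have := Real.log_le_sub_one_of_pos (show (0:ℝ) < s by linarith)
        have h2lt : Real.log 2 < 1 := by
          have := Real.log_two_lt_d9; linarith
        linarith
    _ = s := by ring
  unfold G; linarith

-- log term bound:  log(√s+√(s-1)) ≤ log 2 + log (1+s)
lemma logterm_le {s : ℝ} (hs : 1 ≤ s) :
    Real.log (Real.sqrt s + Real.sqrt (s-1)) ≤ Real.log 2 + Real.log (1+s) := by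
  have hss : Real.sqrt s ≤ 1 + s := by
    have := Real.sqrt_le_sqrt (show s ≤ (1+s)^2 by nlinarith)
    rwa [Real.sqrt_sq (by linarith)] at this
  have h3 : Real.sqrt (s-1) ≤ 1 + s :=
    le_trans (Real.sqrt_le_sqrt (by linarith)) hss
  calc Real.log (Real.sqrt s + Real.sqrt (s-1)) ≤ Real.log (2*(1+s)) :=
        Real.log_le_log (by positivity) (by linarith)
    _ = Real.log 2 + Real.log (1+s) := Real.log_mul (by norm_num) (by linarith)

-- derivative of G
lemma G_hasDerivAt {t : ℝ} (ht : 1 < t) :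
    HasDerivAt G (t / Real.sqrt (t * (t-1))) t := by
  have h0 : 0 < t * (t-1) := by nlinarith
  have hst : 0 < Real.sqrt t := Real.sqrt_pos.mpr (by linarith)
  have hst1 : 0 < Real.sqrt (t-1) := Real.sqrt_pos.mpr (by linarith)
  have hsm : 0 < Real.sqrt (t * (t-1)) := Real.sqrt_pos.mpr h0
  have hmul : Real.sqrt (t * (t-1)) = Real.sqrt t * Real.sqrt (t-1) := Real.sqrt_mul (by linarith) _
  have h1 : HasDerivAt (fun s : ℝ => Real.sqrt (s * (s-1)))
      ((2*t-1) / (2 * Real.sqrt (t * (t-1)))) t := by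
    have hin : HasDerivAt (fun s : ℝ => s * (s-1)) (2*t-1) t := by
      have := (hasDerivAt_id t).mul ((hasDerivAt_id t).sub_const 1)
      refine this.congr_deriv ?_; simp only [id_eq]; ring
    have := (Real.hasDerivAt_sqrt (ne_of_gt h0)).comp t hin
    refine this.congr_deriv ?_
    field_simp
  have h2 : HasDerivAt (fun s : ℝ => Real.log (Real.sqrt s + Real.sqrt (s-1)))
      (1 / (2 * Real.sqrt (t * (t-1)))) t := by
    have hsq : HasDerivAt (fun s : ℝ => Real.sqrt s + Real.sqrt (s-1))
        (1/(2*Real.sqrt t) + 1/(2*Real.sqrt (t-1))) t := by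
      have ha := Real.hasDerivAt_sqrt (show t ≠ 0 by linarith)
      have hb : HasDerivAt (fun s : ℝ => Real.sqrt (s-1)) (1/(2*Real.sqrt (t-1))) t := by
        have := (Real.hasDerivAt_sqrt (show t-1 ≠ 0 by linarith)).comp t
          ((hasDerivAt_id t).sub_const 1)
        exact this.congr_deriv (by ring)
      exact ha.add hb
    have := (Real.hasDerivAt_log (show Real.sqrt t + Real.sqrt (t-1) ≠ 0 by positivity)).comp t hsq
    refine this.congr_deriv ?_
    rw [hmul]
    field_simp
    ring
  have := h1.add h2
  refine this.congr_deriv ?_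
  have : Real.sqrt (t*(t-1)) * Real.sqrt (t*(t-1)) = t*(t-1) := Real.mul_self_sqrt (le_of_lt h0)
  field_simp
  nlinarith [this]

lemma Hext_mono (H : ℝ → ℝ) (hmono : MonotoneOn H (Set.Ici 0))
    (hge : ∀ x : ℝ, 0 ≤ x → 1 ≤ H x) :
    Monotone (fun s : ℝ => if s < 0 then s + 1 else H s) := by
  intro x y hxy
  simp only
  split_ifs with hx hy hy
  · linarith
  · push_neg at hy; have := hge y hy; linarith
  · push_neg at hx; linarith
  · push_neg at hx hy; exact hmono hx hy hxy

lemma Hext_contAt (H : ℝ → ℝ) (hmono : MonotoneOn H (Set.Ici 0))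
    (hge : ∀ x : ℝ, 0 ≤ x → 1 ≤ H x)
    (hsurj : ∀ b : ℝ, 1 ≤ b → ∃ x : ℝ, 0 ≤ x ∧ H x = b) :
    ∀ x : ℝ, 0 < x → ContinuousAt H x := by
  have gmono := Hext_mono H hmono hge
  have gsurj : Function.Surjective (fun s : ℝ => if s < 0 then s + 1 else H s) := by
    intro b
    by_cases hb : b < 1
    · refine ⟨b - 1, ?_⟩
      simp only [if_pos (show b - 1 < 0 by linarith)]; ring
    · push_neg at hb
      obtain ⟨x, hx0, hxb⟩ := hsurj b hb
      exact ⟨x, by simp only [if_neg (not_lt.mpr hx0)]; exact hxb⟩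
  have gcont : Continuous (fun s : ℝ => if s < 0 then s + 1 else H s) :=
    gmono.continuous_of_surjective gsurj
  intro x hx
  apply gcont.continuousAt.congr
  filter_upwards [Ioi_mem_nhds hx] with s hs
  simp only [if_neg (not_lt.mpr (le_of_lt (Set.mem_Ioi.mp hs)))]

theorem stmt15 (H : ℝ → ℝ)
    (hH1 : ∀ x : ℝ, 0 ≤ x → 1 ≤ H x ∧ G (H x) = x)
    (hH2 : ∀ s : ℝ, 1 ≤ s → H (G s) = s) :
    (∃ C : ℝ, 0 < C ∧ ∀ x : ℝ, 0 ≤ x →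
        (∫ s in (0 : ℝ)..x, s / (H s) ^ 2) ≤ C * Real.log (1 + H x)) ∧
      ∃ C' : ℝ, 0 < C' ∧ ∀ q a θ : ℝ, 0 < q → 0 < a →
        |deriv (fun α => (q / α ^ 2) * H (α ^ 2 * |θ| / q)) a| ≤
          C' * (q / a ^ 3) *
            Real.log (1 + (a ^ 2 / q) * ((q / a ^ 2) * H (a ^ 2 * |θ| / q))) := by
  have hH0 : H 0 = 1 := by have := hH2 1 le_rfl; rwa [G_one] at this
  have hHge : ∀ x : ℝ, 0 ≤ x → 1 ≤ H x := fun x hx => (hH1 x hx).1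
  have hGH : ∀ x : ℝ, 0 ≤ x → G (H x) = x := fun x hx => (hH1 x hx).2
  have hxle : ∀ x : ℝ, 0 ≤ x → x ≤ 2 * H x := by
    intro x hx
    have := G_le_two_mul (hHge x hx)
    rwa [hGH x hx] at this
  have Gcont : ContinuousOn G (Set.Ici 1) := by
    have c1 : Continuous fun s : ℝ => Real.sqrt (s * (s - 1)) := by fun_prop
    have c2 : Continuous fun s : ℝ => Real.sqrt s + Real.sqrt (s - 1) := by fun_prop
    unfold G
    apply ContinuousOn.add c1.continuousOn
    apply ContinuousOn.log c2.continuousOn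
    intro s hs
    simp only [Set.mem_Ici] at hs
    have h1 : (1:ℝ) ≤ Real.sqrt s := Real.one_le_sqrt.mpr hs
    have h2 : (0:ℝ) < Real.sqrt s + Real.sqrt (s - 1) := by
      nlinarith [Real.sqrt_nonneg (s - 1)]
    exact ne_of_gt h2
  have Gsm : StrictMonoOn G (Set.Ici 1) := by
    apply strictMonoOn_of_deriv_pos (convex_Ici 1) Gcont
    intro s hs
    rw [interior_Ici] at hs
    have hs1 : (1:ℝ) < s := hs
    rw [(G_hasDerivAt hs1).deriv]
    have h0 : (0:ℝ) < s * (s-1) := by nlinarith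
    exact div_pos (by linarith) (Real.sqrt_pos.mpr h0)
  have Hmono : MonotoneOn H (Set.Ici 0) := by
    intro x hx y hy hxy
    by_contra hlt
    push_neg at hlt
    have := Gsm (Set.mem_Ici.mpr (hHge y hy)) (Set.mem_Ici.mpr (hHge x hx)) hlt
    rw [hGH x hx, hGH y hy] at this
    exact absurd this (not_lt.mpr hxy)
  have Hgt : ∀ u : ℝ, 0 < u → 1 < H u := by
    intro u hu
    rcases lt_or_eq_of_le (hHge u hu.le) with h | h
    · exact h
    · exfalso; have := hGH u hu.le; rw [← h, G_one] at this; linarith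
  have HcontAt := Hext_contAt H Hmono hHge (by
    intro b hb
    exact ⟨G b, G_nonneg hb, hH2 b hb⟩)
  have Hderiv : ∀ u : ℝ, 0 < u →
      HasDerivAt H (Real.sqrt (H u * (H u - 1)) / H u) u := by
    intro u hu
    have ht : 1 < H u := Hgt u hu
    have h0 : (0:ℝ) < H u * (H u - 1) := by nlinarith
    have hfg : ∀ᶠ y in nhds u, G (H y) = y := by
      filter_upwards [Ioi_mem_nhds hu] with s hs
      exact hGH s hs.le
    have hne : H u / Real.sqrt (H u * (H u - 1)) ≠ 0 :=
      ne_of_gt (div_pos (by linarith) (Real.sqrt_pos.mpr h0))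
    have := HasDerivAt.of_local_left_inverse (HcontAt u hu) (G_hasDerivAt ht) hne hfg
    rwa [inv_div] at this
  constructor
  · -- Part 1
    refine ⟨8, by norm_num, ?_⟩
    intro x hx
    have gmono := Hext_mono H Hmono hHge
    have hl2 := Real.log_two_gt_d9
    have hlog2 : Real.log 2 ≤ Real.log (1 + H x) :=
      Real.log_le_log (by norm_num) (by linarith [hHge x hx])
    have hlogpos : (0:ℝ) < Real.log (1 + H x) := by linarith
    -- integrability
    have hgHeq : ∀ s : ℝ, 0 ≤ s → (if s < 0 then s + 1 else H s) = H s :=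
      fun s hs => if_neg (not_lt.mpr hs)
    have hInt : IntervalIntegrable (fun s => s / H s ^ 2) MeasureTheory.volume 0 x := by
      rw [intervalIntegrable_iff, Set.uIoc_of_le hx]
      have hmg : Measurable (fun s : ℝ => s / (if s < 0 then s + 1 else H s) ^ 2) :=
        measurable_id.div (gmono.measurable.pow_const 2)
      have h1 : MeasureTheory.IntegrableOn
          (fun s : ℝ => s / (if s < 0 then s + 1 else H s) ^ 2)
          (Set.Ioc 0 x) MeasureTheory.volume := by
        constructor
        · exact hmg.aestronglyMeasurable
        · apply MeasureTheory.HasFiniteIntegral.of_bounded (C := x)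
          filter_upwards [MeasureTheory.ae_restrict_mem measurableSet_Ioc] with s hs
          rw [hgHeq s hs.1.le]
          have h1s : 1 ≤ H s := hHge s hs.1.le
          rw [Real.norm_eq_abs, abs_of_nonneg (div_nonneg hs.1.le (sq_nonneg _))]
          calc s / H s ^ 2 ≤ s := div_le_self hs.1.le (by nlinarith)
            _ ≤ x := hs.2
      exact h1.congr_fun (fun s hs => by beta_reduce; rw [hgHeq s hs.1.le]) measurableSet_Ioc
    have hmono1 : ∀ s ∈ Set.Icc (0:ℝ) x, s / H s ^ 2 ≤ s := by
      intro s hs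
      have h1s : 1 ≤ H s := hHge s hs.1
      exact div_le_self hs.1 (by nlinarith)
    rcases le_or_gt x 2 with hx2 | hx2
    · have hmone := intervalIntegral.integral_mono_on hx hInt
        (continuous_id.intervalIntegrable 0 x) hmono1
      have hid : (∫ s in (0:ℝ)..x, id s) = (x ^ 2 - 0 ^ 2) / 2 := integral_id
      calc (∫ s in (0:ℝ)..x, s / H s ^ 2) ≤ ∫ s in (0:ℝ)..x, s := hmone
        _ = (x ^ 2 - 0 ^ 2) / 2 := integral_id
        _ ≤ 2 := by nlinarith
        _ ≤ 8 * Real.log (1 + H x) := by nlinarith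
    · have hsub1 : Set.uIcc (0:ℝ) 2 ⊆ Set.uIcc (0:ℝ) x := by
        rw [Set.uIcc_of_le (by norm_num : (0:ℝ) ≤ 2), Set.uIcc_of_le hx]
        exact Set.Icc_subset_Icc le_rfl hx2.le
      have hsub2 : Set.uIcc (2:ℝ) x ⊆ Set.uIcc (0:ℝ) x := by
        rw [Set.uIcc_of_le hx2.le, Set.uIcc_of_le hx]
        exact Set.Icc_subset_Icc (by norm_num) le_rfl
      have hI1 := hInt.mono_set hsub1
      have hI2 := hInt.mono_set hsub2
      have hIc : IntervalIntegrable (fun s : ℝ => 4 * (1 / s)) MeasureTheory.volume 2 x := by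
        apply ContinuousOn.intervalIntegrable
        apply ContinuousOn.mul continuousOn_const
        apply ContinuousOn.div continuousOn_const continuousOn_id
        intro s hs
        rw [Set.uIcc_of_le hx2.le] at hs
        have : (2:ℝ) ≤ s := hs.1
        simp only [id_eq]
        linarith
      have hp1 : (∫ s in (0:ℝ)..2, s / H s ^ 2) ≤ 2 := by
        have hmone := intervalIntegral.integral_mono_on (by norm_num : (0:ℝ) ≤ 2) hI1
          (continuous_id.intervalIntegrable 0 2)
          (fun s hs => hmono1 s ⟨hs.1, le_trans hs.2 hx2.le⟩)
        calc (∫ s in (0:ℝ)..2, s / H s ^ 2) ≤ ∫ s in (0:ℝ)..2, s := hmone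
          _ = ((2:ℝ) ^ 2 - 0 ^ 2) / 2 := integral_id
          _ = 2 := by norm_num
      have hp2 : (∫ s in (2:ℝ)..x, s / H s ^ 2) ≤ 4 * Real.log (x / 2) := by
        have hmone : ∀ s ∈ Set.Icc (2:ℝ) x, s / H s ^ 2 ≤ 4 * (1 / s) := by
          intro s hs
          have hs0 : (0:ℝ) < s := by linarith [hs.1]
          have h2Hs : s ≤ 2 * H s := hxle s hs0.le
          have h1s : 1 ≤ H s := hHge s hs0.le
          rw [mul_one_div, div_le_div_iff₀ (by positivity) hs0]
          nlinarith
        have := intervalIntegral.integral_mono_on hx2.le hI2 hIc hmone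
        calc (∫ s in (2:ℝ)..x, s / H s ^ 2) ≤ ∫ s in (2:ℝ)..x, 4 * (1 / s) := this
          _ = 4 * ∫ s in (2:ℝ)..x, 1 / s := intervalIntegral.integral_const_mul 4 _
          _ = 4 * Real.log (x / 2) := by
              rw [integral_one_div]
              rw [Set.uIcc_of_le hx2.le]
              intro hc
              have := hc.1
              linarith
      have hsplit : (∫ s in (0:ℝ)..x, s / H s ^ 2)
          = (∫ s in (0:ℝ)..2, s / H s ^ 2) + ∫ s in (2:ℝ)..x, s / H s ^ 2 :=
        (intervalIntegral.integral_add_adjacent_intervals hI1 hI2).symm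
      have hxH : Real.log (x / 2) ≤ Real.log (1 + H x) := by
        apply Real.log_le_log (by linarith)
        have := hxle x hx
        linarith
      rw [hsplit]
      linarith
  · -- Part 2
    refine ⟨20, by norm_num, ?_⟩
    intro q a θ hq ha
    have ha3 : (0:ℝ) < q / a ^ 3 := by positivity
    have hl2 := Real.log_two_gt_d9
    by_cases hθ : θ = 0
    · have hfun : (fun α : ℝ => (q / α ^ 2) * H (α ^ 2 * |θ| / q))
          = fun α : ℝ => q / α ^ 2 := by
        funext α
        rw [hθ]
        norm_num [hH0]
      have harg : a ^ 2 * |θ| / q = 0 := by rw [hθ]; simp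
      rw [hfun, harg, hH0]
      have hd : HasDerivAt (fun α : ℝ => q / α ^ 2) (-(2*q)/a^3) a := by
        have hp : HasDerivAt (fun α : ℝ => α ^ 2) (2 * a) a := by
          simpa using hasDerivAt_pow 2 a
        have := (hasDerivAt_const a q).div hp (by positivity)
        refine this.congr_deriv ?_
        field_simp
        ring
      rw [hd.deriv]
      have hRHS : (a ^ 2 / q) * ((q / a ^ 2) * 1) = 1 := by field_simp
      rw [hRHS]
      rw [abs_div, abs_neg, abs_of_pos (by positivity : (0:ℝ) < 2*q),
        abs_of_pos (by positivity : (0:ℝ) < a^3)]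
      rw [show (1:ℝ) + 1 = 2 by norm_num]
      have : 2 * q / a ^ 3 ≤ 13 * (q / a ^ 3) := by
        rw [div_le_iff₀ (by positivity)]
        field_simp
        nlinarith
      calc 2 * q / a ^ 3 ≤ 13 * (q / a ^ 3) := this
        _ ≤ 20 * (q / a ^ 3) * Real.log 2 := by nlinarith
    · set u : ℝ := a ^ 2 * |θ| / q with hudef
      have hu : 0 < u := div_pos (mul_pos (pow_pos ha 2) (abs_pos.mpr hθ)) hq
      set t : ℝ := H u with htdef
      have ht : 1 < t := Hgt u hu
      have h0 : (0:ℝ) < t * (t - 1) := by nlinarith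
      set S : ℝ := Real.sqrt (t * (t - 1)) with hSdef
      have hS0 : 0 < S := Real.sqrt_pos.mpr h0
      have hSS : S * S = t * (t - 1) := Real.mul_self_sqrt h0.le
      have hSt : S ≤ t := sqrt_mul_le ht.le
      set L : ℝ := Real.log (Real.sqrt t + Real.sqrt (t - 1)) with hLdef
      have hL0 : 0 ≤ L := by
        apply Real.log_nonneg
        have := Real.one_le_sqrt.mpr ht.le
        nlinarith [Real.sqrt_nonneg (t - 1)]
      have hU : u = S + L := by
        have := hGH u hu.le
        rw [← this]; rfl
      have hinner : HasDerivAt (fun α : ℝ => α ^ 2 * |θ| / q) (2 * a * |θ| / q) a := by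
        have := ((hasDerivAt_pow 2 a).mul_const |θ|).div_const q
        refine this.congr_deriv ?_
        ring
      have hcomp : HasDerivAt (fun α : ℝ => H (α ^ 2 * |θ| / q))
          (S / t * (2 * a * |θ| / q)) a := by
        exact (Hderiv u hu).comp a hinner
      have hq2 : HasDerivAt (fun α : ℝ => q / α ^ 2) (-(2*q)/a^3) a := by
        have hp : HasDerivAt (fun α : ℝ => α ^ 2) (2 * a) a := by
          simpa using hasDerivAt_pow 2 a
        have := (hasDerivAt_const a q).div hp (by positivity)
        refine this.congr_deriv ?_
        field_simp
        ring
      have hf : HasDerivAt (fun α : ℝ => (q / α ^ 2) * H (α ^ 2 * |θ| / q))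
          ((-(2*q)/a^3) * t + (q / a ^ 2) * (S / t * (2 * a * |θ| / q))) a :=
        hq2.mul hcomp
      rw [hf.deriv]
      have hRHS : (a ^ 2 / q) * ((q / a ^ 2) * t) = t := by field_simp
      rw [hRHS]
      have hθa : |θ| = u * q / a ^ 2 := by
        rw [hudef]; field_simp
      have heq : (-(2*q)/a^3) * t + (q / a ^ 2) * (S / t * (2 * a * |θ| / q))
          = (q / a ^ 3) * (2 * L * (S / t) - 2) := by
        have heq1 : (-(2*q)/a^3) * t + (q / a ^ 2) * (S / t * (2 * a * |θ| / q))
            = (q / a ^ 3) * (-2*t + 2*u*(S/t)) := by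
          rw [hθa]
          field_simp
        have heq2 : -2*t + 2*u*(S/t) = 2 * L * (S / t) - 2 := by
          rw [hU]
          have ht0 : t ≠ 0 := by linarith
          field_simp
          linear_combination hSS
        rw [heq1, heq2]
      rw [heq, abs_mul, abs_of_pos ha3]
      have hfrac : S / t ≤ 1 := by
        rw [div_le_one (by linarith)]; exact hSt
      have hfrac0 : 0 ≤ S / t := by positivity
      have hLle : L ≤ Real.log 2 + Real.log (1 + t) := logterm_le ht.le
      have hlogt : Real.log 2 ≤ Real.log (1 + t) :=
        Real.log_le_log (by norm_num) (by linarith)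
      clear_value u t S L
      have hbound : |2 * L * (S / t) - 2| ≤ 20 * Real.log (1 + t) := by
        have h1 : 0 ≤ 2 * L * (S / t) := by positivity
        have h2 : L * (S / t) ≤ L := mul_le_of_le_one_right hL0 hfrac
        rw [abs_le]
        constructor <;> linarith
      calc q / a ^ 3 * |2 * L * (S / t) - 2|
          ≤ q / a ^ 3 * (20 * Real.log (1 + t)) :=
            mul_le_mul_of_nonneg_left hbound ha3.le
        _ = 20 * (q / a ^ 3) * Real.log (1 + t) := by ring
end
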